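/- Let (s_1, s_2) be a Cuntz family of order 2 on a complex Hilbert space H, let (a_n)_{n≥1} be the associated recursive fermion system, and let Ω ∈ H be a unit vector. Then: (i) a_n Ω = 0 for all n ≥ 1 if and only if s_1^n (s_1^*)^n Ω = Ω for all n ≥ 1 (the Fock representation is P[1]); (i*) a_n^* Ω = 0 for all n ≥ 1 if and only if s_2^n (s_2^*)^n Ω = Ω for all n ≥ 1 (the dual Fock representation is P[2]); (ii) a_{2n−1} Ω = 0 and a_{2n}^* Ω = 0 for all n ≥ 1 if and only if Ω satisfies the P[(1,2)]-condition with respect to (s_1, s_2) (the infinite wedge representation is P[12]); (ii*) a_{2n−1}^* Ω = 0 and a_{2n} Ω = 0 for all n ≥ 1 if and only if Ω satisfies the P[(2,1)]-condition with respect to (s_1, s_2) (the dual infinite wedge representation is P[21]). -/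

import Mathlib

noncomputable section

def IsCuntzFamily {H : Type*} [NormedAddCommGroup H] [InnerProductSpace ℂ H]
    [CompleteSpace H] {N : ℕ} (s : Fin N → H →L[ℂ] H) : Prop :=
  (∀ i j, star (s i) * s j = if i = j then (1 : H →L[ℂ] H) else 0) ∧
  ∑ i, s i * star (s i) = 1

def rfsAux {H : Type*} [NormedAddCommGroup H] [InnerProductSpace ℂ H]
    [CompleteSpace H] (s : Fin 2 → H →L[ℂ] H) : ℕ → H →L[ℂ] H
  | 0 => s 0 * star (s 1)
  | n + 1 => s 0 * rfsAux s n * star (s 0) - s 1 * rfsAux s n * star (s 1)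

/-- `rfs s n` is the fermion generator `a_n` (for `n ≥ 1`). -/
def rfs {H : Type*} [NormedAddCommGroup H] [InnerProductSpace ℂ H]
    [CompleteSpace H] (s : Fin 2 → H →L[ℂ] H) (n : ℕ) : H →L[ℂ] H :=
  rfsAux s (n - 1)

def wordOp {H : Type*} [NormedAddCommGroup H] [InnerProductSpace ℂ H]
    [CompleteSpace H] {N : ℕ} (s : Fin N → H →L[ℂ] H) : List (Fin N) → H →L[ℂ] H
  | [] => 1
  | j :: J => s j * wordOp s J

def PCond {H : Type*} [NormedAddCommGroup H] [InnerProductSpace ℂ H]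
    [CompleteSpace H] {N : ℕ} (s : Fin N → H →L[ℂ] H) (w : ℕ → Fin N) (Ω : H) : Prop :=
  ∀ n : ℕ, (wordOp s (List.ofFn fun k : Fin n => w k) *
      star (wordOp s (List.ofFn fun k : Fin n => w k))) Ω = Ω

/-!
Write `ζ(x) = s₁ x s₁* − s₂ x s₂*`, so that `a_{n+1} = ζⁿ(s₁ s₂*)` and `a_{n+1}* = ζⁿ(s₂ s₁*)`.
The Cuntz relations give `ζ(x) s_j = ± s_j x`, hence `ζⁿ(x) s_L = ± s_L x` for every word `L` of
length `n`. So if `Ω = s_L ψ` lies in the range of the isometry `s_L`, then `ζⁿ(s_j s_k*)`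
(`k ≠ j`) kills `Ω` iff `s_k* ψ = 0`, iff `ψ` lies in the range of `s_j`, iff `Ω` lies in the
range of `s_L s_j`. By induction on `n`, `Ω` satisfies `P[J]` iff for every `n` it is killed by
`a_{n+1}` when `j_{n+1} = 1` and by `a_{n+1}*` when `j_{n+1} = 2`; the four statements are the
cases `J = 1^∞, 2^∞, (12)^∞, (21)^∞`.
-/

theorem Nat.forall_one_le_iff_forall_succ (p : ℕ → Prop) :
    (∀ n, 1 ≤ n → p n) ↔ ∀ n, p (n + 1) :=
  ⟨fun h n => h (n + 1) n.succ_pos, fun h n hn => Nat.succ_pred_eq_of_pos hn ▸ h (n - 1)⟩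

theorem Nat.forall_iff_forall_two_mul_and_two_mul_add_one (p : ℕ → Prop) :
    (∀ n, p n) ↔ ∀ n, p (2 * n) ∧ p (2 * n + 1) := by
  refine ⟨fun h n => ⟨h _, h _⟩, fun h n => ?_⟩
  obtain ⟨k, rfl | rfl⟩ := n.even_or_odd'
  exacts [(h k).1, (h k).2]

section

variable {H : Type*} [NormedAddCommGroup H] [InnerProductSpace ℂ H] [CompleteSpace H]

def zeta (s : Fin 2 → H →L[ℂ] H) (X : H →L[ℂ] H) : H →L[ℂ] H :=
  s 0 * X * star (s 0) - s 1 * X * star (s 1)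

theorem star_zeta (s : Fin 2 → H →L[ℂ] H) (X : H →L[ℂ] H) :
    star (zeta s X) = zeta s (star X) := by
  simp only [zeta, star_sub, star_mul, star_star, mul_assoc]

theorem rfsAux_eq_iterate_zeta (s : Fin 2 → H →L[ℂ] H) (n : ℕ) :
    rfsAux s n = (zeta s)^[n] (s 0 * star (s 1)) := by
  induction n with
  | zero => rfl
  | succ n ih => rw [Function.iterate_succ_apply', ← ih]; rfl

theorem star_iterate_zeta (s : Fin 2 → H →L[ℂ] H) (n : ℕ) (X : H →L[ℂ] H) :
    star ((zeta s)^[n] X) = (zeta s)^[n] (star X) :=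
  Function.Semiconj.iterate_right (star_zeta s) n X

theorem iterate_zeta_mul_star_add_one_eq_ite (s : Fin 2 → H →L[ℂ] H) (n : ℕ) (j : Fin 2) :
    (zeta s)^[n] (s j * star (s (j + 1))) =
      if j = 0 then rfs s (n + 1) else star (rfs s (n + 1)) := by
  fin_cases j <;> simp [rfs, rfsAux_eq_iterate_zeta, star_iterate_zeta]

theorem wordOp_append {N : ℕ} (s : Fin N → H →L[ℂ] H) (L₁ L₂ : List (Fin N)) :
    wordOp s (L₁ ++ L₂) = wordOp s L₁ * wordOp s L₂ := by
  induction L₁ with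
  | nil => simp [wordOp]
  | cons j L ih => simp [wordOp, ih, mul_assoc]

theorem wordOp_ofFn_succ {N : ℕ} (s : Fin N → H →L[ℂ] H) (w : ℕ → Fin N) (n : ℕ) :
    wordOp s (List.ofFn fun k : Fin (n + 1) => w k) =
      wordOp s (List.ofFn fun k : Fin n => w k) * s (w n) := by
  rw [List.ofFn_succ', List.concat_eq_append, wordOp_append]
  simp [wordOp]

theorem wordOp_ofFn_const {N : ℕ} (s : Fin N → H →L[ℂ] H) (j : Fin N) (n : ℕ) :
    wordOp s (List.ofFn fun _ : Fin n => j) = s j ^ n := by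
  induction n with
  | zero => rfl
  | succ n ih => rw [wordOp_ofFn_succ s (fun _ => j), ih, pow_succ]

theorem pCond_const_iff {N : ℕ} (s : Fin N → H →L[ℂ] H) (j : Fin N) (Ω : H) :
    PCond s (fun _ => j) Ω ↔ ∀ n : ℕ, 1 ≤ n → (s j ^ n * star (s j ^ n)) Ω = Ω := by
  simp only [PCond, wordOp_ofFn_const]
  exact ⟨fun h n _ => h n, fun h n => n.eq_zero_or_pos.elim (by rintro rfl; simp) (h n)⟩

theorem apply_eq_zero_iff_of_star_mul_self {W : H →L[ℂ] H} (hW : star W * W = 1) {v : H} :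
    W v = 0 ↔ v = 0 := by
  refine ⟨fun h => ?_, fun h => h ▸ map_zero W⟩
  simpa [h] using (congr($hW v)).symm

theorem conj_apply_eq_self_iff_of_star_mul_self {W : H →L[ℂ] H} (hW : star W * W = 1)
    (Q : H →L[ℂ] H) {Ω : H} (hΩ : (W * star W) Ω = Ω) :
    (W * Q * star W) Ω = Ω ↔ Q (star W Ω) = star W Ω := by
  have hcancel : star W ((W * Q * star W) Ω) = Q (star W Ω) := by
    rw [mul_assoc, mul_apply_eq_comp, ← mul_apply_eq_comp (star W), hW, one_apply_eq_self,
      mul_apply_eq_comp]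
  constructor
  · intro h
    rw [← hcancel, h]
  · intro h
    rw [mul_apply_eq_comp, mul_apply_eq_comp, h, ← mul_apply_eq_comp, hΩ]

end

namespace IsCuntzFamily

variable {H : Type*} [NormedAddCommGroup H] [InnerProductSpace ℂ H] [CompleteSpace H]
  {s : Fin 2 → H →L[ℂ] H}

theorem star_mul_self (hs : IsCuntzFamily s) (j : Fin 2) : star (s j) * s j = 1 := by
  simpa using hs.1 j j

theorem star_mul_of_ne (hs : IsCuntzFamily s) {i j : Fin 2} (hij : i ≠ j) :
    star (s i) * s j = 0 := by
  simpa [hij] using hs.1 i j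

theorem mul_star_add_mul_star_add_one (hs : IsCuntzFamily s) (j : Fin 2) :
    s j * star (s j) + s (j + 1) * star (s (j + 1)) = 1 := by
  have h := hs.2
  rw [Fin.sum_univ_two] at h
  fin_cases j
  · exact h
  · simpa [add_comm] using h

theorem zeta_mul (hs : IsCuntzFamily s) (X : H →L[ℂ] H) (j : Fin 2) :
    zeta s X * s j = (-1 : ℂ) ^ (j : ℕ) • (s j * X) := by
  fin_cases j <;>
    simp [zeta, sub_mul, mul_assoc, hs.star_mul_self, hs.star_mul_of_ne]

theorem iterate_zeta_mul_wordOp (hs : IsCuntzFamily s) (X : H →L[ℂ] H) (L : List (Fin 2)) :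
    (zeta s)^[L.length] X * wordOp s L =
      (-1 : ℂ) ^ (L.map (fun j : Fin 2 => (j : ℕ))).sum • (wordOp s L * X) := by
  induction L with
  | nil => simp [wordOp]
  | cons j L ih =>
    rw [List.length_cons, Function.iterate_succ_apply', wordOp, ← mul_assoc, hs.zeta_mul,
      smul_mul_assoc, mul_assoc, ih, mul_smul_comm, smul_smul, List.map_cons, List.sum_cons,
      pow_add, mul_assoc]

theorem star_wordOp_mul_wordOp (hs : IsCuntzFamily s) (L : List (Fin 2)) :
    star (wordOp s L) * wordOp s L = 1 := by
  induction L with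
  | nil => simp [wordOp]
  | cons j L ih =>
    rw [wordOp, star_mul, mul_assoc, ← mul_assoc (star (s j)), hs.star_mul_self, one_mul, ih]

theorem iterate_zeta_apply_eq_zero_iff (hs : IsCuntzFamily s) (X : H →L[ℂ] H)
    {L : List (Fin 2)} {Ω : H} (hΩ : (wordOp s L * star (wordOp s L)) Ω = Ω) :
    (zeta s)^[L.length] X Ω = 0 ↔ X (star (wordOp s L) Ω) = 0 := by
  have hW := hs.star_wordOp_mul_wordOp L
  rw [← hΩ, mul_apply_eq_comp, ← mul_apply_eq_comp _ (wordOp s L),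
    hs.iterate_zeta_mul_wordOp, smul_apply, smul_eq_zero,
    mul_apply_eq_comp, apply_eq_zero_iff_of_star_mul_self hW,
    ← mul_apply_eq_comp _ (wordOp s L), hW, one_apply_eq_self]
  simp

theorem mul_star_add_one_apply_eq_zero_iff (hs : IsCuntzFamily s) (j : Fin 2) (ψ : H) :
    (s j * star (s (j + 1))) ψ = 0 ↔ (s j * star (s j)) ψ = ψ := by
  have hsum := congr($(hs.mul_star_add_mul_star_add_one j) ψ)
  simp only [add_apply, one_apply_eq_self] at hsum
  rw [mul_apply_eq_comp, apply_eq_zero_iff_of_star_mul_self (hs.star_mul_self j),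
    ← apply_eq_zero_iff_of_star_mul_self (hs.star_mul_self (j + 1)), ← mul_apply_eq_comp]
  constructor
  · intro h; simpa [h] using hsum
  · intro h; rw [h] at hsum; exact add_eq_left.mp hsum

theorem iterate_zeta_apply_eq_zero_iff_ofFn_succ (hs : IsCuntzFamily s) (w : ℕ → Fin 2) (n : ℕ)
    {Ω : H} (hΩ : (wordOp s (List.ofFn fun k : Fin n => w k) *
      star (wordOp s (List.ofFn fun k : Fin n => w k))) Ω = Ω) :
    (zeta s)^[n] (s (w n) * star (s (w n + 1))) Ω = 0 ↔
      (wordOp s (List.ofFn fun k : Fin (n + 1) => w k) *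
        star (wordOp s (List.ofFn fun k : Fin (n + 1) => w k))) Ω = Ω := by
  have hconj : wordOp s (List.ofFn fun k : Fin (n + 1) => w k) *
      star (wordOp s (List.ofFn fun k : Fin (n + 1) => w k)) =
      wordOp s (List.ofFn fun k : Fin n => w k) * (s (w n) * star (s (w n))) *
        star (wordOp s (List.ofFn fun k : Fin n => w k)) := by
    rw [wordOp_ofFn_succ, star_mul]; simp only [mul_assoc]
  have hlen := (List.length_ofFn (f := fun k : Fin n => w k)).symm
  rw [hconj, conj_apply_eq_self_iff_of_star_mul_self (hs.star_wordOp_mul_wordOp _) _ hΩ,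
    ← hs.mul_star_add_one_apply_eq_zero_iff, ← hs.iterate_zeta_apply_eq_zero_iff _ hΩ, ← hlen]

theorem forall_iterate_zeta_apply_eq_zero_iff_pCond (hs : IsCuntzFamily s) (w : ℕ → Fin 2)
    (Ω : H) : (∀ n, (zeta s)^[n] (s (w n) * star (s (w n + 1))) Ω = 0) ↔ PCond s w Ω := by
  refine ⟨fun h n => ?_,
    fun h n => (hs.iterate_zeta_apply_eq_zero_iff_ofFn_succ w n (h n)).2 (h (n + 1))⟩
  induction n with
  | zero => simp [wordOp]
  | succ n ih => exact (hs.iterate_zeta_apply_eq_zero_iff_ofFn_succ w n ih).1 (h n)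

end IsCuntzFamily

theorem fock_and_wedge_as_permutative
    {H : Type*} [NormedAddCommGroup H] [InnerProductSpace ℂ H] [CompleteSpace H]
    (s : Fin 2 → H →L[ℂ] H) (hs : IsCuntzFamily s) (Ω : H) :
    -- (i) the Fock representation is `P[1]`
    ((∀ n : ℕ, 1 ≤ n → rfs s n Ω = 0) ↔
      (∀ n : ℕ, 1 ≤ n → ((s 0) ^ n * star ((s 0) ^ n)) Ω = Ω))
    -- (i*) the dual Fock representation is `P[2]`
    ∧ ((∀ n : ℕ, 1 ≤ n → star (rfs s n) Ω = 0) ↔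
      (∀ n : ℕ, 1 ≤ n → ((s 1) ^ n * star ((s 1) ^ n)) Ω = Ω))
    -- (ii) the infinite wedge representation is `P[12]`
    ∧ ((∀ n : ℕ, 1 ≤ n → rfs s (2 * n - 1) Ω = 0 ∧ star (rfs s (2 * n)) Ω = 0) ↔
      PCond s (fun k => (⟨k % 2, by omega⟩ : Fin 2)) Ω)
    -- (ii*) the dual infinite wedge representation is `P[21]`
    ∧ ((∀ n : ℕ, 1 ≤ n → star (rfs s (2 * n - 1)) Ω = 0 ∧ rfs s (2 * n) Ω = 0) ↔
      PCond s (fun k => (⟨(k + 1) % 2, by omega⟩ : Fin 2)) Ω) := by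
  have key w := hs.forall_iterate_zeta_apply_eq_zero_iff_pCond w Ω
  simp only [iterate_zeta_mul_star_add_one_eq_ite] at key
  have hodd (n : ℕ) : 2 * (n + 1) - 1 = 2 * n + 1 := by omega
  have heven (n : ℕ) : 2 * n + 1 + 1 = 2 * (n + 1) := by ring
  refine ⟨?_, ?_, ?_, ?_⟩
  · rw [← pCond_const_iff, ← key, Nat.forall_one_le_iff_forall_succ]
    simp
  · rw [← pCond_const_iff, ← key, Nat.forall_one_le_iff_forall_succ]
    simp
  · rw [Nat.forall_one_le_iff_forall_succ, ← key, Iff.comm,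
      Nat.forall_iff_forall_two_mul_and_two_mul_add_one]
    simp [hodd, heven]
  · rw [Nat.forall_one_le_iff_forall_succ, ← key, Iff.comm,
      Nat.forall_iff_forall_two_mul_and_two_mul_add_one]
    simp [hodd, heven]
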